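/- There is no real z with z < −√15/5 for which there exist real x₀, x₁, y₀, y₁, y₂ satisfying (s⁴+2s²)(x₀+x₁s+s²)+y₀+y₁s+y₂s² = (s−z)⁶ as polynomials in s. -/

import Mathlib

/-! Comparing the coefficients of s⁵ and s³ gives x₁ = -6z and 2x₁ = -20z³, hence 5z³ = 3z,
whose only negative root is z = -√15/5. -/

open Polynomial

theorem coeff_five_three_of_forall_eq {R : Type*} [CommRing R] [IsDomain R] [Infinite R]
    {z x₀ x₁ y₀ y₁ y₂ : R}
    (h : ∀ s : R, (s ^ 4 + 2 * s ^ 2) * (x₀ + x₁ * s + s ^ 2) + y₀ + y₁ * s + y₂ * s ^ 2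
      = (s - z) ^ 6) :
    x₁ = -6 * z ∧ 2 * x₁ = -20 * z ^ 3 := by
  have hpoly : X ^ 6 + C x₁ * X ^ 5 + C (x₀ + 2) * X ^ 4 + C (2 * x₁) * X ^ 3
        + C (2 * x₀ + y₂) * X ^ 2 + C y₁ * X + C y₀
      = X ^ 6 + C (-6 * z) * X ^ 5 + C (15 * z ^ 2) * X ^ 4 + C (-20 * z ^ 3) * X ^ 3
        + C (15 * z ^ 4) * X ^ 2 + C (-6 * z ^ 5) * X + C (z ^ 6) :=
    Polynomial.funext fun s => by
      simp only [eval_add, eval_mul, eval_pow, eval_C, eval_X]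
      linear_combination h s
  have h5 := congrArg (coeff · 5) hpoly
  have h3 := congrArg (coeff · 3) hpoly
  simp only [coeff_add, coeff_C_mul_X_pow, coeff_X_pow, coeff_C_mul_X, coeff_C] at h5 h3
  norm_num at h5 h3
  exact ⟨by linear_combination h5, by linear_combination h3⟩

theorem eq_neg_sqrt_fifteen_div_five {z : ℝ} (hz : z < 0) (h : 5 * z ^ 3 = 3 * z) :
    z = -(√15 / 5) := by
  have hsq : z ^ 2 = (√15 / 5) ^ 2 := by
    rw [div_pow, Real.sq_sqrt (by norm_num)]
    have := mul_left_cancel₀ hz.ne (by linear_combination h : z * (5 * z ^ 2) = z * 3)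
    linear_combination this / 5
  have hnegz : -z = √15 / 5 := (sq_eq_sq₀ (by linarith) (by positivity)).mp (by rw [neg_sq, hsq])
  linarith

theorem stmt_10 :
    ¬ ∃ z : ℝ, z < -(Real.sqrt 15 / 5) ∧
      ∃ x₀ x₁ y₀ y₁ y₂ : ℝ, ∀ s : ℂ,
        (s ^ 4 + 2 * s ^ 2) * ((x₀ : ℂ) + x₁ * s + s ^ 2) +
          y₀ + y₁ * s + y₂ * s ^ 2 = (s - z) ^ 6 := by
  rintro ⟨z, hz, x₀, x₁, y₀, y₁, y₂, h⟩
  obtain ⟨h5, h3⟩ := coeff_five_three_of_forall_eq h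
  have hcubic : 5 * z ^ 3 = 3 * z := by
    have : (5 * z ^ 3 : ℂ) = 3 * z := by linear_combination (h3 - 2 * h5) / 4
    exact_mod_cast this
  have hneg : z < 0 := hz.trans_le (neg_nonpos.mpr (by positivity))
  exact hz.ne (eq_neg_sqrt_fifteen_div_five hneg hcubic)
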